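/- The number of labeled k-ary trees with n nodes is ∏_{j=0}^{n−1} ((k−1)j + 1). -/

import Mathlib

/-- `k`-ary trees: each internal node carries a label and a list of children
(ordered left to right, with `leaf` marking absent subtrees). -/
inductive KTree where
  | leaf : KTree
  | node : ℕ → List KTree → KTree

/-- The list of labels of a `k`-ary tree. -/
def KTree.labels : KTree → List ℕ
  | .leaf => []
  | .node x c => x :: (c.attach.map (fun t => KTree.labels t.1)).flatten
decreasing_by
  have := List.sizeOf_lt_of_mem t.2
  simp only [KTree.node.sizeOf_spec]
  omega

/-- Every internal node has exactly `k` (possibly absent) children,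
i.e. each node has at most `k` children, distinguished by positions `1,...,k`. -/
inductive KTree.Arity (k : ℕ) : KTree → Prop
  | leaf : Arity k .leaf
  | node (x : ℕ) (c : List KTree) : c.length = k → (∀ t ∈ c, Arity k t) → Arity k (.node x c)

/-- Labels increase along every root-to-leaf path. -/
inductive KTree.Incr : KTree → Prop
  | leaf : Incr .leaf
  | node (x : ℕ) (c : List KTree) :
      (∀ t ∈ c, ∀ y ∈ KTree.labels t, x < y) →
      (∀ t ∈ c, Incr t) → Incr (.node x c)

/-- A labeled `k`-ary tree with `n` nodes: labels are exactly `{1,...,n}`,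
increasing along root-to-leaf paths. -/
def IsLabeledKTree (k n : ℕ) (t : KTree) : Prop :=
  t.Arity k ∧ t.labels.Perm (List.range' 1 n) ∧ t.Incr

/-! In a labeled `k`-ary tree with `n + 1` nodes the node labelled `n + 1` has only leaves as
children. Pruning it leaves a labeled tree with `n` nodes together with a marked leaf, and a
labeled tree with `n` nodes has `(k - 1) * n + 1` leaves, each of which can conversely be grown
into a node labelled `n + 1`. So the count gets multiplied by `(k - 1) * n + 1` at each step. -/

namespace KTree

@[simp] theorem labels_leaf : leaf.labels = [] := by
  rw [labels]

@[simp] theorem labels_node (x : ℕ) (c : List KTree) :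
    (node x c).labels = x :: c.flatMap labels := by
  rw [labels]
  simp [List.flatMap]

theorem labels_eq_nil {t : KTree} : t.labels = [] ↔ t = leaf := by
  cases t <;> simp

def numLeaves : KTree → ℕ
  | leaf => 1
  | node _ c => (c.map numLeaves).sum

/-- The `k * n` child slots of the `n` nodes are taken by the `n - 1` non-root nodes and the
leaves. -/
theorem Arity.numLeaves_add_length_labels {k : ℕ} {t : KTree} (ht : t.Arity k) :
    t.numLeaves + t.labels.length = k * t.labels.length + 1 := by
  induction ht with
  | leaf => simp [numLeaves]
  | node x c hlen _ ih =>
    have key : (c.map fun t => t.numLeaves + t.labels.length).sum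
        = (c.map fun t => k * t.labels.length + 1).sum := congrArg _ (List.map_congr_left ih)
    rw [List.sum_map_add, List.sum_map_add, List.sum_map_mul_left] at key
    simp only [List.map_const', List.sum_replicate, smul_eq_mul, mul_one, hlen] at key
    simp only [numLeaves, labels_node, List.length_cons, List.length_flatMap]
    linarith

def prune (m : ℕ) : KTree → KTree
  | leaf => leaf
  | node x c => if x = m then leaf else node x (c.map (prune m))

section Prune

variable {k m : ℕ}

theorem prune_leaf : prune m leaf = leaf := by
  rw [prune]

theorem prune_node (x : ℕ) (c : List KTree) :
    prune m (node x c) = if x = m then leaf else node x (c.map (prune m)) := by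
  rw [prune]

mutual
theorem prune_of_not_mem (t : KTree) (h : m ∉ t.labels) : prune m t = t :=
  match t with
  | leaf => prune_leaf
  | node x c => by
    simp only [labels_node, List.mem_cons, not_or] at h
    rw [prune_node, if_neg (Ne.symm h.1), map_prune_of_not_mem c h.2]
theorem map_prune_of_not_mem (ts : List KTree) (h : m ∉ ts.flatMap labels) :
    ts.map (prune m) = ts :=
  match ts with
  | [] => rfl
  | t :: ts => by
    simp only [List.flatMap_cons, List.mem_append, not_or] at h
    rw [List.map_cons, prune_of_not_mem t h.1, map_prune_of_not_mem ts h.2]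
end

mutual
theorem labels_prune_sublist (t : KTree) : (prune m t).labels.Sublist t.labels :=
  match t with
  | leaf => by rw [prune_leaf]
  | node x c => by
    rw [prune_node]
    split
    · simp
    · simpa [List.flatMap_map] using (flatMap_labels_map_prune_sublist c).cons_cons x
theorem flatMap_labels_map_prune_sublist (ts : List KTree) :
    ((ts.map (prune m)).flatMap labels).Sublist (ts.flatMap labels) :=
  match ts with
  | [] => by simp
  | t :: ts => by
    simpa using (labels_prune_sublist t).append (flatMap_labels_map_prune_sublist ts)
end

theorem Arity.prune {t : KTree} (ht : t.Arity k) : (prune m t).Arity k := by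
  induction ht with
  | leaf => rw [prune_leaf]; exact .leaf
  | node x c hlen _ ih =>
    rw [prune_node]
    split
    · exact .leaf
    · exact .node _ _ (by simp [hlen]) (by simpa using ih)

theorem Incr.prune {t : KTree} (ht : t.Incr) : (prune m t).Incr := by
  induction ht with
  | leaf => rw [prune_leaf]; exact .leaf
  | node x c hlt _ ih =>
    rw [prune_node]
    split
    · exact .leaf
    · refine .node _ _ ?_ (by simpa using ih)
      simp only [List.mem_map, forall_exists_index, and_imp, forall_apply_eq_imp_iff₂]
      exact fun t ht y hy => hlt t ht y ((labels_prune_sublist t).subset hy)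

/-- In an increasing tree the node carrying the largest label has only leaves below it, so pruning
it removes just that label. -/
theorem Incr.labels_prune {t : KTree} (ht : t.Incr) (hm : ∀ y ∈ t.labels, y ≤ m) :
    (KTree.prune m t).labels = t.labels.filter (· ≠ m) := by
  induction ht with
  | leaf => simp [prune_leaf]
  | node x c hlt _ ih =>
    simp only [labels_node, List.mem_cons, List.mem_flatMap, forall_eq_or_imp] at hm
    rw [prune_node]
    split
    · subst x
      have : c.flatMap labels = [] := List.eq_nil_iff_forall_not_mem.2 fun y hy => by
        obtain ⟨t, ht, hy⟩ := List.mem_flatMap.1 hy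
        exact absurd (hm.2 y ⟨t, ht, hy⟩) (hlt t ht y hy).not_ge
      simp [this]
    · rw [labels_node, labels_node, List.flatMap_map, List.filter_cons_of_pos (by simpa),
        List.filter_flatMap]
      exact congrArg _ (List.flatMap_congr fun t ht => ih t ht fun y hy => hm.2 y ⟨t, ht, hy⟩)

end Prune

mutual
/-- Replaces the `i`-th leaf (counting from `0`, left to right) by a node labelled `m` with `k`
leaf children; does nothing if `t` has at most `i` leaves. -/
def grow (k m : ℕ) : KTree → ℕ → KTree
  | leaf, _ => node m (List.replicate k leaf)
  | node x c, i => node x (growList k m c i)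
def growList (k m : ℕ) : List KTree → ℕ → List KTree
  | [], _ => []
  | t :: ts, i =>
    if i < t.numLeaves then grow k m t i :: ts else t :: growList k m ts (i - t.numLeaves)
end

section Grow

variable {k m : ℕ}

@[simp] theorem length_growList (ts : List KTree) (i : ℕ) :
    (growList k m ts i).length = ts.length := by
  induction ts generalizing i with
  | nil => simp [growList]
  | cons t ts ih => rw [growList]; split <;> simp [ih]

theorem mem_growList {ts : List KTree} {i : ℕ} {s : KTree} (hs : s ∈ growList k m ts i) :
    s ∈ ts ∨ ∃ t ∈ ts, ∃ j < t.numLeaves, s = grow k m t j := by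
  induction ts generalizing i with
  | nil => simp [growList] at hs
  | cons t ts ih =>
    rw [growList] at hs
    split at hs
    · grind
    · rcases List.mem_cons.1 hs with rfl | hs
      · simp
      · grind

mutual
theorem labels_grow_perm (t : KTree) {i : ℕ} (hi : i < t.numLeaves) :
    (t.grow k m i).labels.Perm (m :: t.labels) :=
  match t with
  | leaf => by simp [grow]
  | node x c => by
    rw [numLeaves] at hi
    rw [grow, labels_node, labels_node]
    exact ((flatMap_labels_growList_perm c hi).cons x).trans (.swap _ _ _)
theorem flatMap_labels_growList_perm (ts : List KTree) {i : ℕ}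
    (hi : i < (ts.map numLeaves).sum) :
    ((growList k m ts i).flatMap labels).Perm (m :: ts.flatMap labels) :=
  match ts with
  | [] => by simp at hi
  | t :: ts => by
    rw [growList]
    split
    · exact (labels_grow_perm t ‹_›).append_right _
    · simp only [List.map_cons, List.sum_cons] at hi
      have := flatMap_labels_growList_perm ts (i := i - t.numLeaves) (by omega)
      exact (this.append_left _).trans List.perm_middle
end

theorem Arity.grow {t : KTree} (ht : t.Arity k) (i : ℕ) : (t.grow k m i).Arity k := by
  induction ht generalizing i with
  | leaf => exact .node _ _ List.length_replicate fun s hs => List.eq_of_mem_replicate hs ▸ .leaf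
  | node x c hlen _ ih =>
    rw [KTree.grow]
    refine .node _ _ (by simp [hlen]) fun s hs => ?_
    obtain hs | ⟨t, ht, j, -, rfl⟩ := mem_growList hs
    exacts [‹∀ t ∈ c, _› s hs, ih t ht j]

theorem Incr.grow {t : KTree} (ht : t.Incr) (hm : ∀ y ∈ t.labels, y < m) {i : ℕ}
    (hi : i < t.numLeaves) : (t.grow k m i).Incr := by
  induction ht generalizing i with
  | leaf =>
    refine .node _ _ (fun s hs y hy => ?_) fun s hs => List.eq_of_mem_replicate hs ▸ .leaf
    simp [List.eq_of_mem_replicate hs] at hy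
  | node x c hlt hc ih =>
    rw [KTree.grow]
    have hxm : x < m := hm x (by simp)
    refine .node _ _ (fun s hs y hy => ?_) fun s hs => ?_ <;>
      obtain hs | ⟨t, ht, j, hj, rfl⟩ := mem_growList hs
    · exact hlt s hs y hy
    · rcases List.mem_cons.1 ((labels_grow_perm t hj).mem_iff.1 hy) with rfl | hy
      exacts [hxm, hlt t ht y hy]
    · exact hc s hs
    · exact ih t ht (fun y hy => hm y (by simp; exact .inr ⟨t, ht, hy⟩)) hj

end Grow

mutual
/-- The index of the leaf that `prune m t` puts in place of the node labelled `m`. -/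
def leafIndex (m : ℕ) : KTree → ℕ
  | leaf => 0
  | node x c => if x = m then 0 else leafIndexList m c
def leafIndexList (m : ℕ) : List KTree → ℕ
  | [] => 0
  | t :: ts => if m ∈ t.labels then leafIndex m t else t.numLeaves + leafIndexList m ts
end

section Inverse

variable {k m : ℕ}

mutual
theorem prune_grow (t : KTree) (h : m ∉ t.labels) (i : ℕ) : prune m (t.grow k m i) = t :=
  match t with
  | leaf => by rw [grow, prune_node, if_pos rfl]
  | node x c => by
    simp only [labels_node, List.mem_cons, not_or] at h
    rw [grow, prune_node, if_neg (Ne.symm h.1), map_prune_growList c h.2]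
theorem map_prune_growList (ts : List KTree) (h : m ∉ ts.flatMap labels) (i : ℕ) :
    (growList k m ts i).map (prune m) = ts :=
  match ts with
  | [] => by rw [growList, List.map_nil]
  | t :: ts => by
    simp only [List.flatMap_cons, List.mem_append, not_or] at h
    rw [growList]
    split
    · rw [List.map_cons, prune_grow t h.1, map_prune_of_not_mem ts h.2]
    · rw [List.map_cons, prune_of_not_mem t h.1, map_prune_growList ts h.2]
end

mutual
theorem leafIndex_grow (t : KTree) (h : m ∉ t.labels) {i : ℕ} (hi : i < t.numLeaves) :
    leafIndex m (t.grow k m i) = i :=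
  match t with
  | leaf => by
    rw [numLeaves] at hi
    rw [grow, leafIndex, if_pos rfl]
    omega
  | node x c => by
    simp only [labels_node, List.mem_cons, not_or] at h
    rw [numLeaves] at hi
    rw [grow, leafIndex, if_neg (Ne.symm h.1), leafIndexList_growList c h.2 hi]
theorem leafIndexList_growList (ts : List KTree) (h : m ∉ ts.flatMap labels) {i : ℕ}
    (hi : i < (ts.map numLeaves).sum) : leafIndexList m (growList k m ts i) = i :=
  match ts with
  | [] => by simp at hi
  | t :: ts => by
    simp only [List.flatMap_cons, List.mem_append, not_or] at h
    simp only [List.map_cons, List.sum_cons] at hi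
    rw [growList]
    split
    · rw [leafIndexList, if_pos ((labels_grow_perm t ‹_›).mem_iff.2 List.mem_cons_self),
        leafIndex_grow t h.1 ‹_›]
    · rw [leafIndexList, if_neg h.1, leafIndexList_growList ts h.2 (by omega)]
      omega
end

mutual
theorem leafIndex_lt (t : KTree) (h : m ∈ t.labels) : leafIndex m t < (prune m t).numLeaves :=
  match t with
  | leaf => by simp at h
  | node x c => by
    rw [leafIndex, prune_node]
    split
    · simp [numLeaves]
    · rw [labels_node, List.mem_cons] at h
      rw [numLeaves, List.map_map]
      exact leafIndexList_lt c (h.resolve_left (Ne.symm ‹_›))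
theorem leafIndexList_lt (ts : List KTree) (h : m ∈ ts.flatMap labels) :
    leafIndexList m ts < (ts.map (numLeaves ∘ prune m)).sum :=
  match ts with
  | [] => by simp at h
  | t :: ts => by
    rw [List.flatMap_cons, List.mem_append] at h
    rw [leafIndexList, List.map_cons, List.sum_cons, Function.comp_apply]
    split
    · have := leafIndex_lt t ‹_›
      omega
    · rw [prune_of_not_mem t ‹_›]
      have := leafIndexList_lt ts (h.resolve_left ‹_›)
      omega
end

theorem eq_replicate_leaf_of_root_max {c : List KTree} (ha : (node m c).Arity k)
    (hi : (node m c).Incr) (hm : ∀ y ∈ (node m c).labels, y ≤ m) :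
    c = List.replicate k leaf := by
  obtain _ | ⟨_, _, hlen, _⟩ := ha
  obtain _ | ⟨_, _, hlt, _⟩ := hi
  refine List.eq_replicate_iff.2 ⟨hlen, fun t ht => labels_eq_nil.1 ?_⟩
  refine List.eq_nil_iff_forall_not_mem.2 fun y hy => (hlt t ht y hy).not_ge (hm y ?_)
  simpa using .inr ⟨t, ht, hy⟩

mutual
theorem grow_prune_leafIndex (t : KTree) (ha : t.Arity k) (hi : t.Incr) (hnd : t.labels.Nodup)
    (hle : ∀ y ∈ t.labels, y ≤ m) (hm : m ∈ t.labels) :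
    (prune m t).grow k m (leafIndex m t) = t :=
  match t with
  | leaf => by simp at hm
  | node x c => by
    rw [prune_node, leafIndex]
    split
    · subst x
      rw [grow, eq_replicate_leaf_of_root_max ha hi hle]
    · obtain _ | ⟨_, _, -, ha⟩ := ha
      obtain _ | ⟨_, _, -, hi⟩ := hi
      simp only [labels_node, List.nodup_cons, List.mem_cons, forall_eq_or_imp] at hnd hle hm
      rw [grow, growList_map_prune_leafIndexList c ha hi hnd.2 hle.2
        (hm.resolve_left (Ne.symm ‹_›))]
theorem growList_map_prune_leafIndexList (ts : List KTree) (ha : ∀ t ∈ ts, t.Arity k)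
    (hi : ∀ t ∈ ts, t.Incr) (hnd : (ts.flatMap labels).Nodup)
    (hle : ∀ y ∈ ts.flatMap labels, y ≤ m) (hm : m ∈ ts.flatMap labels) :
    growList k m (ts.map (prune m)) (leafIndexList m ts) = ts :=
  match ts with
  | [] => by simp at hm
  | t :: ts => by
    simp only [List.flatMap_cons, List.nodup_append, List.mem_append] at hnd hle hm
    simp only [List.mem_cons, forall_eq_or_imp] at ha hi
    rw [List.map_cons, leafIndexList, growList]
    split
    · have hts : m ∉ ts.flatMap labels := fun h => hnd.2.2 m ‹_› m h rfl
      rw [if_pos (leafIndex_lt t ‹_›), grow_prune_leafIndex t ha.1 hi.1 hnd.1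
        (fun y hy => hle y (.inl hy)) ‹_›, map_prune_of_not_mem ts hts]
    · rw [prune_of_not_mem t ‹_›, if_neg (by omega), Nat.add_sub_cancel_left,
        growList_map_prune_leafIndexList ts ha.2 hi.2 hnd.2.1 (fun y hy => hle y (.inr hy))
          (hm.resolve_left ‹_›)]
end

end Inverse

end KTree

open KTree

theorem IsLabeledKTree.mem_labels_iff {k n : ℕ} {t : KTree} (h : IsLabeledKTree k n t) {y : ℕ} :
    y ∈ t.labels ↔ 1 ≤ y ∧ y ≤ n := by
  rw [h.2.1.mem_iff, List.mem_range'_1]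
  omega

theorem IsLabeledKTree.numLeaves {k n : ℕ} {t : KTree} (hk : 1 ≤ k) (h : IsLabeledKTree k n t) :
    t.numLeaves = (k - 1) * n + 1 := by
  have := h.1.numLeaves_add_length_labels
  rw [h.2.1.length_eq, List.length_range'] at this
  obtain ⟨k, rfl⟩ := Nat.exists_eq_add_of_le hk
  rw [add_mul] at this
  simp only [add_tsub_cancel_left]
  omega

theorem List.range'_one_concat (n : ℕ) : List.range' 1 (n + 1) = List.range' 1 n ++ [n + 1] := by
  rw [List.range'_concat, one_mul, add_comm]

theorem IsLabeledKTree.prune {k n : ℕ} {t : KTree} (h : IsLabeledKTree k (n + 1) t) :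
    IsLabeledKTree k n (prune (n + 1) t) := by
  refine ⟨h.1.prune, ?_, h.2.2.prune⟩
  rw [h.2.2.labels_prune fun y hy => (h.mem_labels_iff.1 hy).2]
  convert h.2.1.filter (· ≠ n + 1) using 1
  rw [List.range'_one_concat, List.filter_append, List.filter_eq_self.2, List.filter_singleton]
  · simp
  · simp only [List.mem_range'_1]
    intro y hy
    simpa [add_comm] using hy.2.ne

theorem IsLabeledKTree.grow {k n i : ℕ} {t : KTree} (hk : 1 ≤ k) (h : IsLabeledKTree k n t)
    (hi : i < (k - 1) * n + 1) : IsLabeledKTree k (n + 1) (t.grow k (n + 1) i) := by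
  rw [← h.numLeaves hk] at hi
  refine ⟨h.1.grow i, ?_, h.2.2.grow (fun y hy => ?_) hi⟩
  · rw [List.range'_one_concat]
    exact (labels_grow_perm t hi).trans ((h.2.1.cons _).trans (List.perm_append_singleton _ _).symm)
  · exact Nat.lt_succ_of_le (h.mem_labels_iff.1 hy).2

theorem IsLabeledKTree.leafIndex_lt {k n : ℕ} {t : KTree} (hk : 1 ≤ k)
    (h : IsLabeledKTree k (n + 1) t) : leafIndex (n + 1) t < (k - 1) * n + 1 := by
  rw [← h.prune.numLeaves hk]
  exact KTree.leafIndex_lt t (h.mem_labels_iff.2 (by omega))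

theorem IsLabeledKTree.grow_prune_leafIndex {k n : ℕ} {t : KTree}
    (h : IsLabeledKTree k (n + 1) t) :
    (KTree.prune (n + 1) t).grow k (n + 1) (leafIndex (n + 1) t) = t :=
  KTree.grow_prune_leafIndex t h.1 h.2.2 (h.2.1.nodup_iff.2 List.nodup_range')
    (fun _ hy => (h.mem_labels_iff.1 hy).2) (h.mem_labels_iff.2 (by omega))

theorem IsLabeledKTree.succ_not_mem_labels {k n : ℕ} {t : KTree} (h : IsLabeledKTree k n t) :
    n + 1 ∉ t.labels :=
  fun hm => by simpa using (h.mem_labels_iff.1 hm).2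

def labeledKTreeSuccEquiv {k : ℕ} (n : ℕ) (hk : 1 ≤ k) :
    {t // IsLabeledKTree k (n + 1) t} ≃ {t // IsLabeledKTree k n t} × Fin ((k - 1) * n + 1) where
  toFun t := (⟨prune (n + 1) t, t.2.prune⟩, ⟨leafIndex (n + 1) t, t.2.leafIndex_lt hk⟩)
  invFun p := ⟨p.1.1.grow k (n + 1) p.2, p.1.2.grow hk p.2.2⟩
  left_inv t := Subtype.ext t.2.grow_prune_leafIndex
  right_inv p := by
    have hi : p.2.1 < p.1.1.numLeaves := (p.1.2.numLeaves hk).symm ▸ p.2.2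
    exact Prod.ext (Subtype.ext (prune_grow _ p.1.2.succ_not_mem_labels _))
      (Fin.ext (leafIndex_grow _ p.1.2.succ_not_mem_labels hi))

theorem isLabeledKTree_zero_iff {k : ℕ} {t : KTree} : IsLabeledKTree k 0 t ↔ t = leaf := by
  refine ⟨fun h => labels_eq_nil.1 (by simpa using h.2.1), ?_⟩
  rintro rfl
  exact ⟨.leaf, by simp, .leaf⟩

/-- The number of labeled `k`-ary trees with `n` nodes is `∏_{j=0}^{n-1} ((k-1)j + 1)`. -/
theorem labeledKTree_card (k n : ℕ) (hk : 1 ≤ k) :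
    {t : KTree | IsLabeledKTree k n t}.ncard
      = ∏ j ∈ Finset.range n, ((k - 1) * j + 1) := by
  rw [← Nat.card_coe_set_eq, Set.coe_ofPred]
  induction n with
  | zero => simp [isLabeledKTree_zero_iff]
  | succ n ih =>
    rw [Finset.prod_range_succ, ← ih, Nat.card_congr (labeledKTreeSuccEquiv n hk), Nat.card_prod,
      Nat.card_fin]
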